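/- Bernoulli-type integral inequality: let g ∈ L¹(0,T) be nonnegative, y₀ > 0, and y : [0,T] → ℝ continuous with y(t)² ≤ y₀² + ∫₀ᵗ g(s)·y(s) ds for all t ∈ [0,T]. Then |y(t)| ≤ y₀ + 2∫₀ᵗ g(s) ds for all t ∈ [0,T]. -/
import Mathlib


open MeasureTheory intervalIntegral

theorem stmt_4 (T : ℝ) (hT : 0 < T) (g y : ℝ → ℝ) (y₀ : ℝ) (hy₀ : 0 < y₀)
    (hg_int : IntegrableOn g (Set.Icc 0 T))
    (hg_nonneg : ∀ t ∈ Set.Icc (0:ℝ) T, 0 ≤ g t)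
    (hy_cont : ContinuousOn y (Set.Icc 0 T))
    (hineq : ∀ t ∈ Set.Icc (0:ℝ) T, (y t) ^ 2 ≤ y₀ ^ 2 + ∫ s in (0:ℝ)..t, g s * y s) :
    ∀ t ∈ Set.Icc (0:ℝ) T, |y t| ≤ y₀ + 2 * ∫ s in (0:ℝ)..t, g s := by
  intro t ht
  obtain ⟨ht0, htT⟩ := ht
  have hsub : Set.Icc (0:ℝ) t ⊆ Set.Icc 0 T := Set.Icc_subset_Icc le_rfl htT
  -- max of |y| on [0, t]
  obtain ⟨s, hs, hmax⟩ := isCompact_Icc.exists_isMaxOn (f := fun x => |y x|)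
    ⟨t, Set.mem_Icc.2 ⟨ht0, le_rfl⟩⟩ ((hy_cont.mono hsub).abs)
  obtain ⟨hs0, hst⟩ := hs
  have hsT : s ∈ Set.Icc (0:ℝ) T := hsub ⟨hs0, hst⟩
  set M := |y s| with hM
  have hM0 : 0 ≤ M := abs_nonneg _
  have hMt : |y t| ≤ M := hmax ⟨ht0, le_rfl⟩
  -- integrability of g on subintervals
  have hg_int_s : IntervalIntegrable g volume 0 s := by
    rw [intervalIntegrable_iff_integrableOn_Icc_of_le hs0]
    exact hg_int.mono_set (Set.Icc_subset_Icc le_rfl hsT.2)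
  have hg_int_st : IntervalIntegrable g volume s t := by
    rw [intervalIntegrable_iff_integrableOn_Icc_of_le hst]
    exact hg_int.mono_set (Set.Icc_subset_Icc hs0 htT)
  -- integrability of g * y on [0, s]
  have hgy_int : IntervalIntegrable (fun x => g x * y x) volume 0 s := by
    rw [intervalIntegrable_iff_integrableOn_Icc_of_le hs0]
    have hgm : AEStronglyMeasurable g (volume.restrict (Set.Icc 0 s)) :=
      (hg_int.mono_set (Set.Icc_subset_Icc le_rfl hsT.2)).aestronglyMeasurable
    have hym : AEStronglyMeasurable y (volume.restrict (Set.Icc 0 s)) :=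
      ((hy_cont.mono (Set.Icc_subset_Icc le_rfl hsT.2)).aestronglyMeasurable
        measurableSet_Icc)
    refine Integrable.mono' ((hg_int.mono_set
      (Set.Icc_subset_Icc le_rfl hsT.2)).const_mul M) (hgm.mul hym) ?_
    rw [ae_restrict_iff' measurableSet_Icc]
    filter_upwards with x hx
    have hx' : x ∈ Set.Icc (0:ℝ) T := Set.Icc_subset_Icc le_rfl hsT.2 hx
    have hgx : 0 ≤ g x := hg_nonneg x hx'
    have hyx : |y x| ≤ M := hmax ⟨hx.1, hx.2.trans hst⟩
    calc ‖g x * y x‖ = g x * |y x| := by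
          rw [norm_mul, Real.norm_eq_abs, Real.norm_eq_abs, abs_of_nonneg hgx]
      _ ≤ g x * M := mul_le_mul_of_nonneg_left hyx hgx
      _ = M * g x := mul_comm _ _
  -- nonnegativity of integrals of g
  have hGs0 : 0 ≤ ∫ x in (0:ℝ)..s, g x :=
    intervalIntegral.integral_nonneg hs0 (fun x hx =>
      hg_nonneg x ⟨hx.1, hx.2.trans hsT.2⟩)
  have hGst0 : 0 ≤ ∫ x in s..t, g x :=
    intervalIntegral.integral_nonneg hst (fun x hx =>
      hg_nonneg x ⟨hs0.trans hx.1, hx.2.trans htT⟩)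
  have hsplit : (∫ x in (0:ℝ)..s, g x) + ∫ x in s..t, g x = ∫ x in (0:ℝ)..t, g x :=
    intervalIntegral.integral_add_adjacent_intervals hg_int_s hg_int_st
  have hGle : (∫ x in (0:ℝ)..s, g x) ≤ ∫ x in (0:ℝ)..t, g x := by linarith
  have hGt0 : 0 ≤ ∫ x in (0:ℝ)..t, g x := le_trans hGs0 hGle
  -- bound the integral term
  have hInt : (∫ x in (0:ℝ)..s, g x * y x) ≤ M * ∫ x in (0:ℝ)..s, g x := by
    rw [← intervalIntegral.integral_const_mul]
    refine intervalIntegral.integral_mono_on hs0 hgy_int (hg_int_s.const_mul M) ?_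
    intro x hx
    have hgx : 0 ≤ g x := hg_nonneg x ⟨hx.1, hx.2.trans hsT.2⟩
    have hyx : y x ≤ M := (le_abs_self _).trans (hmax ⟨hx.1, hx.2.trans hst⟩)
    calc g x * y x ≤ g x * M := mul_le_mul_of_nonneg_left hyx hgx
      _ = M * g x := mul_comm _ _
  -- main inequality
  have hkey : M ^ 2 ≤ y₀ ^ 2 + M * ∫ x in (0:ℝ)..t, g x := by
    have h1 := hineq s hsT
    have h2 : M ^ 2 = (y s) ^ 2 := sq_abs _
    have h3 : M * (∫ x in (0:ℝ)..s, g x) ≤ M * ∫ x in (0:ℝ)..t, g x :=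
      mul_le_mul_of_nonneg_left hGle hM0
    linarith
  have hfin : M ≤ y₀ + 2 * ∫ x in (0:ℝ)..t, g x := by
    nlinarith [sq_nonneg (M - y₀), sq_nonneg M]
  linarith
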